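/- For every integer c ≥ 2 and every integer p ≥ 1, there exists a c-edge-colored graph G on n vertices (for some n ≥ c) with δ_mon(G) = p, having no properly colored cycle, and such that p ≥ (1/c)·(log_c n − log_c (log_c n)), where logarithms are to base c. Consequently d(n,c), the minimum k such that every c-edge-colored graph of order n with δ_mon ≥ k has a properly colored cycle, satisfies d(n,c) ≥ (1/c)(log_c n − log_c log_c n) for infinitely many n. -/

import Mathlib

/-- The number of edges of color `i` incident with the vertex `x` in the
`c`-edge-colored graph `(G, χ)`. -/
noncomputable def monDeg {V : Type} {c : ℕ} (G : SimpleGraph V) (χ : Sym2 V → Fin c)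
    (x : V) (i : Fin c) : ℕ :=
  Nat.card {y : V // G.Adj x y ∧ χ s(x, y) = i}

/-- The minimum monochromatic degree `δ_mon(G)` of a `c`-edge-colored graph. -/
noncomputable def minMonDeg {V : Type} {c : ℕ} (G : SimpleGraph V) (χ : Sym2 V → Fin c) : ℕ :=
  sInf {k : ℕ | ∃ (x : V) (i : Fin c), monDeg G χ x i = k}

/-- `(G, χ)` has a properly colored cycle: a cycle in which no two consecutive
edges (cyclically, including the final/first pair) have the same color. -/
def HasProperlyColoredCycle {V : Type} {c : ℕ} (G : SimpleGraph V)
    (χ : Sym2 V → Fin c) : Prop :=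
  ∃ (v : V) (w : G.Walk v v), w.IsCycle ∧
    ∀ i : Fin w.edges.length,
      χ (w.edges.get i) ≠
        χ (w.edges.get ⟨((i : ℕ) + 1) % w.edges.length, Nat.mod_lt _ i.pos⟩)

/-- `d(n,c)`: the minimum `k` such that every `c`-edge-colored graph of order
`n` with minimum monochromatic degree at least `k` has a properly colored
cycle. -/
noncomputable def dFun (n c : ℕ) : ℕ :=
  sInf {k : ℕ | ∀ (V : Type) (_ : Fintype V) (G : SimpleGraph V) (χ : Sym2 V → Fin c),
    Nat.card V = n → k ≤ minMonDeg G χ → HasProperlyColoredCycle G χ}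

/-! Take as vertices the words over `Fin c` in which every letter occurs at most `p` times, join
two words when one is a proper prefix of the other, and colour the edge by the letter of the
longer word just past the end of the shorter one.

On a cycle, a shortest vertex `u` is a prefix of every other vertex of the cycle, and away from
`u` adjacent vertices agree at position `|u|`; hence the two cycle edges at `u` have the same
colour, and no cycle is properly coloured. In colour `i` a word `x` is joined to its prefixes
that stop just before an occurrence of `i` and to the words `x ++ i^j` with `count i ≤ p`, so
every monochromatic degree is at least `p`, with equality for `0^p`. Finally there are at least
`c^p` and at most `(cp + 1) c^(cp)` such words, which gives the logarithmic bound and infinitely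
many orders `n`. -/

open SimpleGraph

section CyclicallyProper

variable {β γ : Type*}

def IsCyclicallyProper (χ : β → γ) (l : List β) : Prop :=
  ∀ i : Fin l.length,
    χ (l.get i) ≠ χ (l.get ⟨((i : ℕ) + 1) % l.length, Nat.mod_lt _ i.pos⟩)

variable {χ : β → γ} {l l' : List β}

theorem IsCyclicallyProper.isRotated (h : IsCyclicallyProper χ l) (hl : l ~r l') :
    IsCyclicallyProper χ l' := by
  obtain ⟨n, rfl⟩ := hl
  intro i
  have hlen : (l.rotate n).length = l.length := l.length_rotate n
  have hi : (i + n) % l.length < l.length := Nat.mod_lt _ (hlen ▸ i.pos)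
  have hnext : ((((i : ℕ) + 1) % l.length + n) % l.length) =
      (((i : ℕ) + n) % l.length + 1) % l.length := by
    rw [Nat.mod_add_mod, Nat.mod_add_mod, Nat.add_right_comm]
  simpa [List.getElem_rotate, hlen, hnext] using h ⟨_, hi⟩

theorem IsCyclicallyProper.apply_ne {x y : β} (h : IsCyclicallyProper χ (x :: (l ++ [y]))) :
    χ y ≠ χ x := by
  simpa using h ⟨l.length + 1, by simp⟩

end CyclicallyProper

theorem SimpleGraph.Walk.IsCycle.exists_eq_cons_concat {V : Type*} {G : SimpleGraph V} {u : V}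
    {c : G.Walk u u} (hc : c.IsCycle) :
    ∃ (a b : V) (hub : G.Adj u b) (hau : G.Adj a u) (r : G.Walk b a),
      u ∉ r.support ∧ c = .cons hub (r.concat hau) := by
  cases c with
  | nil => exact absurd hc Walk.not_isCycle_nil
  | cons hub q =>
    obtain ⟨hq, -⟩ := (Walk.cons_isCycle_iff q hub).1 hc
    cases q with
    | nil => exact absurd hub G.irrefl
    | cons h q' =>
      obtain ⟨a, r, hau, hr⟩ := Walk.exists_cons_eq_concat h q'
      rw [hr, Walk.concat_isPath_iff] at hq
      exact ⟨a, _, hub, hau, r, hq.2, by rw [hr]⟩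

section ListLemmas

variable {α : Type} {l₁ l₂ : List α}

theorem List.IsPrefix.length_lt_of_ne (h : l₁ <+: l₂) (hne : l₁ ≠ l₂) :
    l₁.length < l₂.length :=
  h.length_le.lt_of_ne fun hlen => hne (h.eq_of_length hlen)

theorem List.IsPrefix.getD_eq (h : l₁ <+: l₂) {n : ℕ} (hn : n < l₁.length) (d : α) :
    l₂.getD n d = l₁.getD n d := by
  rw [List.getD_eq_getElem _ _ (hn.trans_le h.length_le), List.getD_eq_getElem _ _ hn,
    h.getElem hn]

variable [DecidableEq α]

theorem List.IsPrefix.count_lt_count (h : l₁ <+: l₂) (hlen : l₁.length < l₂.length) {a : α}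
    (ha : l₂[l₁.length] = a) : l₁.count a < l₂.count a := by
  obtain ⟨t, rfl⟩ := h
  have hmem : a ∈ t := by
    rw [← ha, List.getElem_append_right (le_refl _)]
    exact List.getElem_mem _
  rw [List.count_append]
  have := List.count_pos_iff.2 hmem
  omega

theorem List.card_getElem_eq (l : List α) (a : α) :
    Nat.card {m : Fin l.length // l[m] = a} = l.count a := by
  rw [Nat.card_eq_fintype_card, Fintype.card_subtype]
  exact Fin.card_filter_univ_eq_vector_get_eq_count a ⟨l, rfl⟩

end ListLemmas

section PrefixGraph

variable {α : Type} {P : List α → Prop}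

def prefixGraph (P : List α → Prop) : SimpleGraph {l : List α // P l} where
  Adj a b := a ≠ b ∧ (a.1 <+: b.1 ∨ b.1 <+: a.1)
  symm := ⟨fun _ _ h => ⟨h.1.symm, h.2.symm⟩⟩
  loopless := ⟨fun _ h => h.1 rfl⟩

def nextLetter [Inhabited α] (P : List α → Prop) : Sym2 {l : List α // P l} → α :=
  Sym2.lift ⟨fun a b => if a.1.length < b.1.length then b.1.getD a.1.length default
      else a.1.getD b.1.length default, by
    intro a b
    rcases lt_trichotomy a.1.length b.1.length with h | h | h
    · simp [h, h.not_gt]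
    · simp [h]
    · simp [h, h.not_gt]⟩

theorem nextLetter_of_length_lt [Inhabited α] {a b : {l : List α // P l}}
    (h : a.1.length < b.1.length) : nextLetter P s(a, b) = b.1.getD a.1.length default := by
  simp [nextLetter, h]

theorem prefixGraph.adj_of_prefix {a b : {l : List α // P l}} (hab : a.1 <+: b.1)
    (hlen : a.1.length < b.1.length) : (prefixGraph P).Adj a b :=
  ⟨fun h => hlen.ne (congrArg (List.length ∘ Subtype.val) h), Or.inl hab⟩

theorem prefixGraph.prefix_of_adj {a b : {l : List α // P l}} (hab : (prefixGraph P).Adj a b)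
    {u : List α} (hua : u <+: a.1) (hub : u.length ≤ b.1.length) : u <+: b.1 := by
  rcases hab.2 with hab | hba
  · exact hua.trans hab
  · exact List.prefix_of_prefix_length_le hua hba hub

theorem prefixGraph.getD_eq_of_walk {u a b : {l : List α // P l}}
    (r : (prefixGraph P).Walk a b) (hua : u.1 <+: a.1)
    (hr : ∀ z ∈ r.support, z ≠ u ∧ u.1.length ≤ z.1.length) (d : α) :
    u.1 <+: b.1 ∧ b.1.getD u.1.length d = a.1.getD u.1.length d := by
  induction r with
  | nil => exact ⟨hua, rfl⟩
  | @cons a a' b hadj r ih =>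
    have hua' : u.1 <+: a'.1 := prefixGraph.prefix_of_adj hadj hua (hr a' (by simp)).2
    obtain ⟨hub, hba'⟩ := ih hua' fun z hz => hr z (by simp [hz])
    refine ⟨hub, hba'.trans ?_⟩
    have ha := hua.length_lt_of_ne fun h => (hr a (by simp)).1 (Subtype.ext h).symm
    have ha' := hua'.length_lt_of_ne fun h => (hr a' (by simp)).1 (Subtype.ext h).symm
    rcases hadj.2 with h | h
    · exact h.getD_eq ha d
    · exact (h.getD_eq ha' d).symm

theorem prefixGraph.not_isCyclicallyProper [Inhabited α] {v : {l : List α // P l}}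
    {w : (prefixGraph P).Walk v v} (hw : w.IsCycle) :
    ¬ IsCyclicallyProper (nextLetter P) w.edges := by
  classical
  intro hproper
  obtain ⟨u, hu, hmin⟩ := w.support.toFinset.exists_min_image (fun z => z.1.length)
    ⟨v, by simp⟩
  rw [List.mem_toFinset] at hu
  obtain ⟨a, b, hub, hau, r, hur, hrot⟩ := (hw.rotate hu).exists_eq_cons_concat
  have hproper' := hproper.isRotated (w.rotate_edges u hu).symm
  rw [hrot, Walk.edges_cons, Walk.edges_concat, List.concat_eq_append] at hproper'
  have hr : ∀ z ∈ r.support, z ≠ u ∧ u.1.length ≤ z.1.length := by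
    refine fun z hz => ⟨fun h => hur (h ▸ hz), hmin z (List.mem_toFinset.2 ?_)⟩
    rw [← Walk.mem_support_rotate_iff w u hu, hrot]
    simp [hz]
  have hlt {z} (hz : z ∈ r.support) (huz : u.1 <+: z.1) : u.1.length < z.1.length :=
    huz.length_lt_of_ne fun h => (hr z hz).1 (Subtype.ext h).symm
  have hb := prefixGraph.prefix_of_adj hub List.prefix_rfl (hr b r.start_mem_support).2
  obtain ⟨ha, hab⟩ := prefixGraph.getD_eq_of_walk r hb hr default
  apply hproper'.apply_ne
  rw [Sym2.eq_swap, nextLetter_of_length_lt (hlt r.end_mem_support ha),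
    nextLetter_of_length_lt (hlt r.start_mem_support hb), hab]

theorem prefixGraph.not_hasProperlyColoredCycle {c : ℕ} [NeZero c] {P : List (Fin c) → Prop} :
    ¬ HasProperlyColoredCycle (prefixGraph P) (nextLetter P) :=
  fun ⟨_, _, hw, hproper⟩ => prefixGraph.not_isCyclicallyProper hw hproper

end PrefixGraph

section CountBounded

variable {α : Type} [DecidableEq α] {p : ℕ}

def CountBounded (p : ℕ) (l : List α) : Prop := ∀ a, l.count a ≤ p

theorem CountBounded.length_le [Fintype α] {l : List α} (h : CountBounded p l) :
    l.length ≤ Fintype.card α * p := by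
  calc l.length = ∑ a, l.count a := by simp [← Multiset.coe_count]
    _ ≤ ∑ _a : α, p := Finset.sum_le_sum fun a _ => h a
    _ = Fintype.card α * p := by simp

variable [Fintype α]

instance : Finite {l : List α // CountBounded p l} :=
  ((List.finite_length_le α (Fintype.card α * p)).subset
    fun _ hl => CountBounded.length_le hl).to_subtype

theorem CountBounded.pow_le_card :
    Fintype.card α ^ p ≤ Nat.card {l : List α // CountBounded p l} := by
  have hinj : Function.Injective fun f : Fin p → α =>
      (⟨List.ofFn f, fun a => (List.count_le_length).trans (by simp)⟩ :
        {l : List α // CountBounded p l}) :=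
    fun f g h => List.ofFn_injective (congrArg Subtype.val h)
  simpa using Nat.card_le_card_of_injective _ hinj

theorem CountBounded.card_le_card (hp : 1 ≤ p) :
    Fintype.card α ≤ Nat.card {l : List α // CountBounded p l} :=
  (Nat.le_self_pow (by omega) _).trans CountBounded.pow_le_card

variable [Inhabited α]

def CountBounded.lengthAndEntries (l : {l : List α // CountBounded p l}) :
    Fin (Fintype.card α * p + 1) × (Fin (Fintype.card α * p) → α) :=
  (⟨l.1.length, Nat.lt_succ_of_le l.2.length_le⟩, fun j => l.1.getD j default)

theorem CountBounded.lengthAndEntries_injective :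
    Function.Injective (CountBounded.lengthAndEntries (α := α) (p := p)) := by
  intro l l' h
  simp only [CountBounded.lengthAndEntries, Prod.mk.injEq, Fin.mk.injEq, funext_iff] at h
  refine Subtype.ext (List.ext_getElem h.1 fun j hj hj' => ?_)
  have := h.2 ⟨j, hj.trans_le l.2.length_le⟩
  rwa [List.getD_eq_getElem _ _ hj, List.getD_eq_getElem _ _ hj'] at this

theorem CountBounded.card_le :
    Nat.card {l : List α // CountBounded p l} ≤
      (Fintype.card α * p + 1) * Fintype.card α ^ (Fintype.card α * p) := by
  simpa using Nat.card_le_card_of_injective _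
    (CountBounded.lengthAndEntries_injective (α := α) (p := p))

end CountBounded

section MonochromaticDegree

variable {c p : ℕ} [NeZero c]

/-- The neighbours in colour `i` include the prefixes `x.take m` with `x[m] = i`, one for each
occurrence of `i` in `x`, and the `p - count i x` extensions `x ++ i^(j+1)`. -/
theorem le_monDeg_prefixGraph (x : {l : List (Fin c) // CountBounded p l}) (i : Fin c) :
    p ≤ monDeg (prefixGraph (CountBounded p)) (nextLetter _) x i := by
  set k := x.1.count i
  have hk : k ≤ p := x.2 i
  let down (m : {m : Fin x.1.length // x.1[m] = i}) :
      {y // (prefixGraph (CountBounded p)).Adj x y ∧ nextLetter (CountBounded p) s(x, y) = i} :=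
    let y : {l : List (Fin c) // CountBounded p l} :=
      ⟨x.1.take m, fun a => ((List.take_sublist _ _).count_le a).trans (x.2 a)⟩
    have hlen : y.1.length < x.1.length := by simp [y]
    ⟨y, (prefixGraph.adj_of_prefix (List.take_prefix _ _) hlen).symm, by
      rw [Sym2.eq_swap, nextLetter_of_length_lt hlen]
      simpa [y, List.getD_eq_getElem] using m.2⟩
  let up (j : Fin (p - k)) :
      {y // (prefixGraph (CountBounded p)).Adj x y ∧ nextLetter (CountBounded p) s(x, y) = i} :=
    let y : {l : List (Fin c) // CountBounded p l} :=
      ⟨x.1 ++ List.replicate (j + 1) i, fun a => by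
        rw [List.count_append, List.count_replicate]
        by_cases ha : i = a
        · subst ha; have := j.2; simp; omega
        · simpa [ha] using x.2 a⟩
    have hlen : x.1.length < y.1.length := by simp [y]
    ⟨y, prefixGraph.adj_of_prefix (List.prefix_append _ _) hlen, by
      rw [nextLetter_of_length_lt hlen]
      simp [y]⟩
  have hinj : Function.Injective (Sum.elim down up) := by
    rintro (m | j) (m' | j') h <;> have hlen := congrArg (fun y => y.1.1.length) h <;>
      simp only [Sum.elim_inl, Sum.elim_inr, down, up, List.length_take, List.length_append,
        List.length_replicate] at hlen
    · exact congrArg Sum.inl (Subtype.ext (Fin.ext (by omega)))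
    · omega
    · omega
    · exact congrArg Sum.inr (Fin.ext (by omega))
  calc p = Nat.card ({m : Fin x.1.length // x.1[m] = i} ⊕ Fin (p - k)) := by
        rw [Nat.card_sum, List.card_getElem_eq, Nat.card_eq_fintype_card, Fintype.card_fin]
        omega
    _ ≤ _ := Nat.card_le_card_of_injective _ hinj

theorem monDeg_prefixGraph_le_of_count_eq {x : {l : List (Fin c) // CountBounded p l}}
    {i : Fin c} (hx : x.1.count i = p) :
    monDeg (prefixGraph (CountBounded p)) (nextLetter _) x i ≤ p := by
  have hdown : ∀ y : {y // (prefixGraph (CountBounded p)).Adj x y ∧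
      nextLetter (CountBounded p) s(x, y) = i},
      y.1.1 <+: x.1 ∧ ∃ h : y.1.1.length < x.1.length, x.1[y.1.1.length] = i := by
    rintro ⟨y, ⟨hne, hxy | hyx⟩, hcol⟩
    · have hlen := hxy.length_lt_of_ne (Subtype.coe_ne_coe.2 hne)
      rw [nextLetter_of_length_lt hlen, List.getD_eq_getElem _ _ hlen] at hcol
      exact absurd (y.2 i) (hx ▸ (hxy.count_lt_count hlen hcol)).not_ge
    · have hlen := hyx.length_lt_of_ne (Subtype.coe_ne_coe.2 hne.symm)
      rw [Sym2.eq_swap, nextLetter_of_length_lt hlen, List.getD_eq_getElem _ _ hlen] at hcol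
      exact ⟨hyx, hlen, hcol⟩
  calc _ ≤ Nat.card {m : Fin x.1.length // x.1[m] = i} :=
        Nat.card_le_card_of_injective
          (fun y => ⟨⟨y.1.1.length, (hdown y).2.1⟩, (hdown y).2.2⟩) fun y y' h => by
            have hlen : y.1.1.length = y'.1.1.length := congrArg (fun m => (m.1 : ℕ)) h
            exact Subtype.ext (Subtype.ext ((List.prefix_of_prefix_length_le (hdown y).1
              (hdown y').1 hlen.le).eq_of_length hlen))
    _ = p := by rw [List.card_getElem_eq, hx]

theorem minMonDeg_prefixGraph :
    minMonDeg (prefixGraph (CountBounded (α := Fin c) p)) (nextLetter _) = p := by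
  let x : {l : List (Fin c) // CountBounded p l} :=
    ⟨List.replicate p 0, fun a => by rw [List.count_replicate]; split <;> omega⟩
  have hx : monDeg (prefixGraph (CountBounded p)) (nextLetter _) x 0 = p :=
    (monDeg_prefixGraph_le_of_count_eq (by simp [x])).antisymm (le_monDeg_prefixGraph x 0)
  refine le_antisymm (Nat.sInf_le ⟨x, 0, hx⟩) (le_csInf ⟨p, x, 0, hx⟩ ?_)
  rintro _ ⟨y, i, rfl⟩
  exact le_monDeg_prefixGraph y i

end MonochromaticDegree

theorem minMonDeg_le_card {V : Type} [Finite V] {c : ℕ} (G : SimpleGraph V)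
    (χ : Sym2 V → Fin c) : minMonDeg G χ ≤ Nat.card V := by
  rcases Set.eq_empty_or_nonempty {k : ℕ | ∃ (x : V) (i : Fin c), monDeg G χ x i = k}
    with h | h
  · simp [minMonDeg, h]
  · obtain ⟨_, x, i, rfl⟩ := h
    exact le_trans (Nat.sInf_le ⟨x, i, rfl⟩)
      (Nat.card_le_card_of_injective _ Subtype.val_injective)

theorem minMonDeg_lt_dFun_of_not_hasProperlyColoredCycle {V : Type} [Finite V] {c : ℕ}
    {G : SimpleGraph V} {χ : Sym2 V → Fin c} (h : ¬ HasProperlyColoredCycle G χ) :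
    minMonDeg G χ < dFun (Nat.card V) c := by
  refine Nat.lt_of_succ_le (le_csInf ⟨Nat.card V + 1, ?_⟩ fun k hk => ?_)
  · intro W _ H ψ hW hk
    exact absurd (minMonDeg_le_card H ψ) (by omega)
  · by_contra! hlt
    exact h (hk V (Fintype.ofFinite V) G χ rfl (by omega))

theorem Real.logb_sub_logb_logb_le {b x : ℝ} {N : ℕ} (hb : 1 < b) (hN : b ≤ N) (hx : b ≤ x)
    (hxN : x ≤ (N + 1) * b ^ N) : logb b x - logb b (logb b x) ≤ N := by
  have hb0 : 0 < b := by linarith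
  have hL : 1 ≤ logb b x := by
    simpa [logb_self_eq_one hb] using logb_le_logb_of_le hb hb0 hx
  have hLN : logb b x ≤ logb b (N + 1) + N := by
    simpa [logb_mul, logb_pow, logb_self_eq_one hb, hb0.ne', (by positivity : (N : ℝ) + 1 ≠ 0)]
      using logb_le_logb_of_le hb (hb0.trans_le hx) hxN
  rcases le_total (logb b x) N with h | h
  · linarith [logb_nonneg hb hL]
  rcases le_total (logb b x) (N + 1) with h' | h'
  · have hNb : 1 ≤ logb b N := by
      simpa [logb_self_eq_one hb] using logb_le_logb_of_le hb hb0 hN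
    linarith [logb_le_logb_of_le hb (hb0.trans_le hN) h]
  · linarith [logb_le_logb_of_le hb (by positivity) h']

theorem CountBounded.logb_card_sub_logb_logb_card_le {α : Type} [DecidableEq α] [Fintype α]
    [Inhabited α] {p : ℕ} (hα : 2 ≤ Fintype.card α) (hp : 1 ≤ p) :
    1 / (Fintype.card α : ℝ) *
        (Real.logb (Fintype.card α) (Nat.card {l : List α // CountBounded p l}) -
          Real.logb (Fintype.card α)
            (Real.logb (Fintype.card α) (Nat.card {l : List α // CountBounded p l}))) ≤ p := by
  set b := Fintype.card α
  set n := Nat.card {l : List α // CountBounded p l}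
  have hbN : b ≤ b * p := Nat.le_mul_of_pos_right _ hp
  have hbn : b ≤ n := CountBounded.card_le_card hp
  have hnN : n ≤ (b * p + 1) * b ^ (b * p) := CountBounded.card_le
  have hb : (0 : ℝ) < b := by positivity
  calc 1 / (b : ℝ) * (Real.logb b n - Real.logb b (Real.logb b n)) ≤ 1 / b * (b * p : ℕ) := by
        gcongr
        exact Real.logb_sub_logb_logb_le (by exact_mod_cast hα) (by exact_mod_cast hbN)
          (by exact_mod_cast hbn) (by exact_mod_cast hnN)
    _ = p := by push_cast; field_simp

/-- For every `c ≥ 2` and `p ≥ 1` there is a `c`-edge-colored graph on `n ≥ c`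
vertices with `δ_mon = p`, no properly colored cycle, and
`p ≥ (1/c)(log_c n − log_c log_c n)`. Consequently
`d(n,c) ≥ (1/c)(log_c n − log_c log_c n)` for infinitely many `n`. -/
theorem exists_no_properly_colored_cycle_log_bound (c p : ℕ) (hc : 2 ≤ c) (hp : 1 ≤ p) :
    (∃ (V : Type) (_ : Fintype V) (G : SimpleGraph V) (χ : Sym2 V → Fin c),
        c ≤ Nat.card V ∧ minMonDeg G χ = p ∧ ¬ HasProperlyColoredCycle G χ ∧
        (1 / (c : ℝ)) *
            (Real.logb c (Nat.card V) - Real.logb c (Real.logb c (Nat.card V))) ≤ (p : ℝ)) ∧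
    {n : ℕ |
      (1 / (c : ℝ)) * (Real.logb c n - Real.logb c (Real.logb c n)) ≤ (dFun n c : ℝ)}.Infinite := by
  have : NeZero c := ⟨by omega⟩
  have hbound (q : ℕ) (hq : 1 ≤ q) :
      1 / (c : ℝ) * (Real.logb c (Nat.card {l : List (Fin c) // CountBounded q l}) -
        Real.logb c (Real.logb c (Nat.card {l : List (Fin c) // CountBounded q l}))) ≤ q := by
    simpa only [Fintype.card_fin] using
      CountBounded.logb_card_sub_logb_logb_card_le (α := Fin c) (by simpa using hc) hq
  refine ⟨⟨_, Fintype.ofFinite _, prefixGraph (CountBounded p), nextLetter _, ?_,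
    minMonDeg_prefixGraph, prefixGraph.not_hasProperlyColoredCycle, hbound p hp⟩, ?_⟩
  · simpa using CountBounded.card_le_card (α := Fin c) hp
  refine Set.infinite_of_forall_exists_gt fun a =>
    ⟨Nat.card {l : List (Fin c) // CountBounded (a + 1) l}, ?_, ?_⟩
  · have hd := minMonDeg_lt_dFun_of_not_hasProperlyColoredCycle
      (prefixGraph.not_hasProperlyColoredCycle (P := CountBounded (α := Fin c) (a + 1)))
    rw [minMonDeg_prefixGraph] at hd
    exact (hbound (a + 1) le_add_self).trans (Nat.cast_le.2 hd.le)
  · calc a < c ^ (a + 1) := a.lt_succ_self.trans (Nat.lt_pow_self (by omega))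
      _ ≤ _ := by simpa using CountBounded.pow_le_card (α := Fin c) (p := a + 1)
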